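/- arXiv:1310.1907 — 2 statements merged into one kernel-verified Lean document; each statement's English description precedes it below -/
import Mathlib

section
/- Let Γ be a bilinear lattice admitting two complete exceptional sequences E and F (i.e., ℤE = Γ = ℤF). Then s_E = s_F; that is, the Coxeter transformation of Γ does not depend on the choice of complete exceptional sequence. -/
/-- An element `a` is a pseudo-real root if `⟨a,a⟩ > 0` and `⟨a,a⟩` divides
`⟨a,x⟩` and `⟨x,a⟩` for all `x`. -/
def IsPseudoReal {Γ : Type} [AddCommGroup Γ] (B : Γ →ₗ[ℤ] Γ →ₗ[ℤ] ℤ) (a : Γ) : Prop :=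
  0 < B a a ∧ ∀ x : Γ, B a a ∣ B a x ∧ B a a ∣ B x a

/-- Non-degeneracy of the bilinear form. -/
def Nondeg {Γ : Type} [AddCommGroup Γ] (B : Γ →ₗ[ℤ] Γ →ₗ[ℤ] ℤ) : Prop :=
  (∀ x, (∀ y, B x y = 0) → x = 0) ∧ (∀ y, (∀ x, B x y = 0) → y = 0)

/-- The reflection `s_a(x) = x - 2((x,a)/(a,a)) • a`, where `(x,y) = ⟨x,y⟩ + ⟨y,x⟩`. -/
def sRefl {Γ : Type} [AddCommGroup Γ] (B : Γ →ₗ[ℤ] Γ →ₗ[ℤ] ℤ) (a x : Γ) : Γ :=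
  x - ((2 * (B x a + B a x)) / (2 * B a a)) • a

/-- `s_E = s_{e_1} ∘ ⋯ ∘ s_{e_r}` for a list `E = [e_1, …, e_r]`. -/
def sSeq {Γ : Type} [AddCommGroup Γ] (B : Γ →ₗ[ℤ] Γ →ₗ[ℤ] ℤ) (l : List Γ) (x : Γ) : Γ :=
  l.foldr (sRefl B) x

/-!
For an exceptional sequence `E = (e_1, …, e_r)`, the composite `s_E` satisfies
`⟨y, s_E x⟩ = -⟨x, y⟩` for every `y ∈ ℤE`. Peeling off `s_{e_1}`: it fixes
`⟨y, -⟩` for `y ∈ ℤ{e_2, …, e_r}` because `⟨e_j, e_1⟩ = 0`, and on `y = e_1` it gives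
`⟨e_1, s_{e_1} z⟩ = -⟨z, e_1⟩`, where `z = s_{e_2} ⋯ s_{e_r} x` differs from `x` by an
element of `ℤ{e_2, …, e_r}`, which is again left-orthogonal to `e_1`. When `E` is complete
this pins down `s_E x` by non-degeneracy, independently of `E`.
-/

namespace IsPseudoReal

variable {Γ : Type} [AddCommGroup Γ] {B : Γ →ₗ[ℤ] Γ →ₗ[ℤ] ℤ} {a : Γ}

-- The integer division in `sRefl` is exact for a pseudo-real root.
theorem reflCoeff_mul (ha : IsPseudoReal B a) (x : Γ) :
    (2 * (B x a + B a x)) / (2 * B a a) * B a a = B x a + B a x := by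
  rw [Int.mul_ediv_mul_of_pos _ _ two_pos]
  exact Int.ediv_mul_cancel (dvd_add (ha.2 x).2 (ha.2 x).1)

theorem apply_sRefl_self (ha : IsPseudoReal B a) (x : Γ) :
    B a (sRefl B a x) = -B x a := by
  have hq := ha.reflCoeff_mul x
  simp only [sRefl, map_sub, map_smul, smul_eq_mul]
  linarith [mul_comm (B a a) ((2 * (B x a + B a x)) / (2 * B a a))]

end IsPseudoReal

section Reflections

variable {Γ : Type} [AddCommGroup Γ] (B : Γ →ₗ[ℤ] Γ →ₗ[ℤ] ℤ)

theorem apply_sRefl_of_apply_eq_zero {a y : Γ} (hya : B y a = 0) (x : Γ) :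
    B y (sRefl B a x) = B y x := by
  simp [sRefl, hya]

theorem sSeq_sub_mem_span (l : List Γ) (x : Γ) :
    sSeq B l x - x ∈ Submodule.span ℤ {z | z ∈ l} := by
  induction l with
  | nil => simp [sSeq]
  | cons a l ih =>
    rw [sSeq, List.foldr_cons, sRefl, sub_right_comm]
    exact Submodule.sub_mem _ (Submodule.span_mono (fun z hz => List.mem_cons_of_mem a hz) ih)
      (Submodule.smul_mem _ _ (Submodule.subset_span (List.mem_cons_self ..)))

theorem apply_sSeq_eq_neg {l : List Γ} (hroot : ∀ a ∈ l, IsPseudoReal B a)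
    (hexc : l.Pairwise fun u v => B v u = 0) (x : Γ) {y : Γ}
    (hy : y ∈ Submodule.span ℤ {z | z ∈ l}) : B y (sSeq B l x) = -B x y := by
  suffices Submodule.span ℤ {z | z ∈ l} ≤ LinearMap.ker (B.flip (sSeq B l x) + B x) from
    eq_neg_of_add_eq_zero_left (this hy)
  clear hy y
  induction l with
  | nil => simp
  | cons a l ih =>
    obtain ⟨hleft, hexc⟩ := List.pairwise_cons.mp hexc
    have hl := fun y (hy : y ∈ Submodule.span ℤ {z | z ∈ l}) => eq_neg_of_add_eq_zero_left
      (LinearMap.mem_ker.mp (ih (fun b hb => hroot b (List.mem_cons_of_mem a hb)) hexc hy))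
    set z := sSeq B l x
    rw [Submodule.span_le]
    rintro y (_ | ⟨_, hy⟩)
    · have hzx : B z a = B x a := by
        have hspan : Submodule.span ℤ {w | w ∈ l} ≤ LinearMap.ker (B.flip a) :=
          Submodule.span_le.mpr hleft
        simpa [sub_eq_zero] using hspan (sSeq_sub_mem_span B l x)
      have ha := (hroot a (List.mem_cons_self ..)).apply_sRefl_self z
      show B a (sRefl B a z) + B x a = 0
      rw [ha, hzx, neg_add_cancel]
    · have hya := apply_sRefl_of_apply_eq_zero B (hleft y hy) z
      have hyz : B y z = -B x y := hl y (Submodule.subset_span hy)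
      show B y (sRefl B a z) + B x y = 0
      rw [hya, hyz, neg_add_cancel]

theorem apply_sSeq_ofFn_eq_neg {r : ℕ} {e : Fin r → Γ} (hroot : ∀ i, IsPseudoReal B (e i))
    (hexc : ∀ i j : Fin r, j < i → B (e i) (e j) = 0)
    (hcomp : Submodule.span ℤ (Set.range e) = ⊤) (x y : Γ) :
    B y (sSeq B (List.ofFn e) x) = -B x y := by
  refine apply_sSeq_eq_neg B ?_ (List.pairwise_ofFn.mpr fun i j hij => hexc j i hij) x ?_
  · simpa [List.mem_ofFn] using hroot
  · rw [show {z | z ∈ List.ofFn e} = Set.range e from Set.ext (List.mem_ofFn' e), hcomp]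
    trivial

end Reflections

theorem statement5_general (Γ : Type) [AddCommGroup Γ]
    (B : Γ →ₗ[ℤ] Γ →ₗ[ℤ] ℤ) (hB : Nondeg B)
    (r s : ℕ) (e : Fin r → Γ) (f : Fin s → Γ)
    (hroote : ∀ i, IsPseudoReal B (e i))
    (hexce : ∀ i j : Fin r, j < i → B (e i) (e j) = 0)
    (hcompe : Submodule.span ℤ (Set.range e) = ⊤)
    (hrootf : ∀ i, IsPseudoReal B (f i))
    (hexcf : ∀ i j : Fin s, j < i → B (f i) (f j) = 0)
    (hcompf : Submodule.span ℤ (Set.range f) = ⊤) :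
    ∀ x : Γ, sSeq B (List.ofFn e) x = sSeq B (List.ofFn f) x := by
  intro x
  refine sub_eq_zero.mp (hB.2 _ fun y => ?_)
  rw [map_sub, apply_sSeq_ofFn_eq_neg B hroote hexce hcompe,
    apply_sSeq_ofFn_eq_neg B hrootf hexcf hcompf, sub_self]

/-- The Coxeter transformation does not depend on the choice of complete exceptional sequence. -/
theorem statement5 (Γ : Type) [AddCommGroup Γ] [Module.Free ℤ Γ] [Module.Finite ℤ Γ]
    (B : Γ →ₗ[ℤ] Γ →ₗ[ℤ] ℤ) (hB : Nondeg B)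
    (r s : ℕ) (e : Fin r → Γ) (f : Fin s → Γ)
    (hroote : ∀ i, IsPseudoReal B (e i))
    (hexce : ∀ i j : Fin r, j < i → B (e i) (e j) = 0)
    (hcompe : Submodule.span ℤ (Set.range e) = ⊤)
    (hrootf : ∀ i, IsPseudoReal B (f i))
    (hexcf : ∀ i j : Fin s, j < i → B (f i) (f j) = 0)
    (hcompf : Submodule.span ℤ (Set.range f) = ⊤) :
    ∀ x : Γ, sSeq B (List.ofFn e) x = sSeq B (List.ofFn f) x :=
  statement5_general Γ B hB r s e f hroote hexce hcompe hrootf hexcf hcompf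
end

section
/- Let W be a finite reflection group on Euclidean space V and let w ∈ W with w ≠ id. Then there exists a root a ∈ Im(id − w) such that s_a w fixes pointwise a subspace strictly larger than Fix(w). Specifically, if a = x − w(x) is a root, then 2(a,x) = (a,a), hence s_a(x) = w(x), and s_a w fixes both Fix(w) and x. -/
open scoped RealInnerProductSpace

/-- The reflection in a root `a`: `s_a(x) = x - 2(⟪x,a⟫/⟪a,a⟫) • a`. -/
noncomputable def sR {V : Type} [NormedAddCommGroup V] [InnerProductSpace ℝ V]
    (a x : V) : V :=
  x - (2 * ⟪x, a⟫ / ⟪a, a⟫) • a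

/-- A linear automorphism is a reflection if it is given by `s_a` for some nonzero root `a`. -/
def IsReflAuto {V : Type} [NormedAddCommGroup V] [InnerProductSpace ℝ V]
    (g : V ≃ₗ[ℝ] V) : Prop :=
  ∃ a : V, a ≠ 0 ∧ ∀ x, g x = sR a x

/-!
The heart of the matter is that some root `β` of `G` is orthogonal to `Fix(w)`: then `β` lies in
`Fix(w)ᗮ = Im(id - w)`, say `β = x - w x`, the reflection `s_β` fixes `Fix(w)`, and
`s_β (w x) = x` because `w x` and `x` have the same length.

If no root were orthogonal to `Fix(w)`, a generic point `p` of `Fix(w)` would be orthogonal to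
no root. Call a root positive when it pairs positively with `p`, and let `Δ` be a minimal set of
positive roots whose nonnegative cone contains every positive root. As in the classical theory,
the roots in `Δ` are pairwise obtuse, hence linearly independent; a reflection `s_α`, `α ∈ Δ`,
makes no positive root other than `α` negative; the `s_α` generate `G`; and by the exchange
argument every `g ≠ 1` sends some `α ∈ Δ` to a negative root. But `w` fixes `p`, so it preserves
`⟪p, ·⟫` and keeps every root of `Δ` positive, hence `w = 1`.
-/

namespace ReflectionGroup

variable {V : Type} [NormedAddCommGroup V] [InnerProductSpace ℝ V]

section Reflection

lemma inner_sR_root (a x : V) : ⟪sR a x, a⟫ = -⟪x, a⟫ := by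
  rcases eq_or_ne a 0 with rfl | ha
  · simp
  · have : ⟪a, a⟫ ≠ 0 := inner_self_ne_zero.mpr ha
    simp only [sR, inner_sub_left, real_inner_smul_left]
    field_simp
    ring

lemma sR_sR (a x : V) : sR a (sR a x) = x := by
  rw [sR, inner_sR_root, sR]
  module

lemma sR_smul {c : ℝ} (hc : c ≠ 0) (a x : V) : sR (c • a) x = sR a x := by
  rcases eq_or_ne a 0 with rfl | ha
  · simp
  have : ⟪a, a⟫ ≠ 0 := inner_self_ne_zero.mpr ha
  simp only [sR, real_inner_smul_left, real_inner_smul_right, smul_smul]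
  congr 2
  field_simp

lemma sR_of_inner_self_eq_one {a : V} (ha : ⟪a, a⟫ = 1) (x : V) :
    sR a x = x - (2 * ⟪x, a⟫) • a := by
  rw [sR, ha, div_one]

lemma sR_self (a : V) : sR a a = -a := by
  rcases eq_or_ne a 0 with rfl | ha
  · simp [sR]
  · rw [sR, mul_div_assoc, div_self (inner_self_ne_zero.mpr ha)]
    module

lemma sR_of_inner_eq_zero {a x : V} (h : ⟪x, a⟫ = 0) : sR a x = x := by
  simp [sR, h]

noncomputable def sEquiv (a : V) : V ≃ₗ[ℝ] V :=
  LinearEquiv.ofInvolutive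
    { toFun := sR a
      map_add' := fun x y => by
        simp only [sR, inner_add_left, mul_add, add_div, add_smul]
        abel
      map_smul' := fun c x => by
        simp only [sR, real_inner_smul_left, RingHom.id_apply, smul_sub, smul_smul]
        ring_nf }
    (sR_sR a)

@[simp] lemma sEquiv_apply (a x : V) : sEquiv a x = sR a x := rfl

lemma sEquiv_mul_self (a : V) : sEquiv a * sEquiv a = 1 :=
  LinearEquiv.ext (sR_sR a)

lemma sEquiv_inv (a : V) : (sEquiv a)⁻¹ = sEquiv a :=
  inv_eq_of_mul_eq_one_left (sEquiv_mul_self a)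

lemma sEquiv_smul {c : ℝ} (hc : c ≠ 0) (a : V) : sEquiv (c • a) = sEquiv a :=
  LinearEquiv.ext (sR_smul hc a)

lemma sEquiv_neg (a : V) : sEquiv (-a) = sEquiv a := by
  simpa using sEquiv_smul (neg_ne_zero.mpr one_ne_zero) a

lemma sEquiv_apply_eq_conj {g : V ≃ₗ[ℝ] V} (hg : ∀ x y, ⟪g x, g y⟫ = ⟪x, y⟫) (a : V) :
    sEquiv (g a) = g * sEquiv a * g⁻¹ := by
  ext x
  have hx : g (g⁻¹ x) = x := g.apply_symm_apply x
  have : (g * sEquiv a * g⁻¹) x = g (sR a (g⁻¹ x)) := rfl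
  rw [this, sEquiv_apply, sR, sR, map_sub, map_smul, hx, hg, ← hg (g⁻¹ x), hx]

lemma eq_or_eq_neg_of_eq_smul {a b : V} {m : ℝ} (ha : ⟪a, a⟫ = 1) (hb : ⟪b, b⟫ = 1)
    (h : b = m • a) : b = a ∨ b = -a := by
  have hm : m * m = 1 := by
    rw [h, real_inner_smul_left, real_inner_smul_right, ha, mul_one] at hb
    exact hb
  rcases mul_self_eq_one_iff.mp hm with rfl | rfl <;> simp [h]

lemma eq_or_eq_neg_of_sEquiv_eq {a b : V} (ha : ⟪a, a⟫ = 1) (hb : ⟪b, b⟫ = 1)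
    (h : sEquiv a = sEquiv b) : b = a ∨ b = -a := by
  have hab : sR a b = -b := by rw [← sEquiv_apply, h, sEquiv_apply, sR_self]
  rw [sR_of_inner_self_eq_one ha] at hab
  refine eq_or_eq_neg_of_eq_smul ha hb (m := ⟪b, a⟫) ?_
  linear_combination (norm := module) (1 / 2 : ℝ) • hab

end Reflection

section Roots

-- Roots are normalized to unit length, so each reflection of `G` has exactly the roots `±a`.
def roots (G : Subgroup (V ≃ₗ[ℝ] V)) : Set V := {a | ⟪a, a⟫ = 1 ∧ sEquiv a ∈ G}

def IsOrthogonal (G : Subgroup (V ≃ₗ[ℝ] V)) : Prop := ∀ g ∈ G, ∀ x y : V, ⟪g x, g y⟫ = ⟪x, y⟫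

variable {G : Subgroup (V ≃ₗ[ℝ] V)}

lemma ne_zero_of_mem_roots {a : V} (ha : a ∈ roots G) : a ≠ 0 := by
  rintro rfl
  simpa using ha.1

lemma neg_mem_roots {a : V} (ha : a ∈ roots G) : -a ∈ roots G :=
  ⟨by simpa using ha.1, by simpa [sEquiv_neg] using ha.2⟩

lemma apply_mem_roots (horth : IsOrthogonal G) {g : V ≃ₗ[ℝ] V} (hg : g ∈ G) {a : V}
    (ha : a ∈ roots G) : g a ∈ roots G := by
  refine ⟨by rw [horth g hg, ha.1], ?_⟩
  rw [sEquiv_apply_eq_conj (horth g hg)]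
  exact mul_mem (mul_mem hg ha.2) (inv_mem hg)

lemma roots_finite [Finite G] : (roots G).Finite := by
  have hfiber (g : V ≃ₗ[ℝ] V) : {a : V | ⟪a, a⟫ = 1 ∧ sEquiv a = g}.Finite := by
    rcases Set.eq_empty_or_nonempty {a : V | ⟪a, a⟫ = 1 ∧ sEquiv a = g} with h | ⟨c, hc⟩
    · exact h ▸ Set.finite_empty
    · exact (Set.toFinite {c, -c}).subset fun b hb =>
        eq_or_eq_neg_of_sEquiv_eq hc.1 hb.1 (hc.2.trans hb.2.symm)
  refine ((Set.toFinite (G : Set (V ≃ₗ[ℝ] V))).biUnion fun g _ => hfiber g).subset ?_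
  intro a ha
  exact Set.mem_biUnion ha.2 ⟨ha.1, rfl⟩

lemma exists_mem_roots_of_isReflAuto {t : V ≃ₗ[ℝ] V} (ht : t ∈ G) (hrefl : IsReflAuto t) :
    ∃ b ∈ roots G, t = sEquiv b := by
  obtain ⟨a, ha, hta⟩ := hrefl
  have hnorm : ‖a‖ ≠ 0 := norm_ne_zero_iff.mpr ha
  have hsEquiv : sEquiv (‖a‖⁻¹ • a) = t :=
    (sEquiv_smul (inv_ne_zero hnorm) a).trans (LinearEquiv.ext fun x => (hta x).symm)
  refine ⟨‖a‖⁻¹ • a, ⟨?_, hsEquiv ▸ ht⟩, hsEquiv.symm⟩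
  rw [real_inner_smul_left, real_inner_smul_right, real_inner_self_eq_norm_sq]
  field_simp

def IsRegular (G : Subgroup (V ≃ₗ[ℝ] V)) (v : V) : Prop := ∀ a ∈ roots G, ⟪v, a⟫ ≠ 0

def positiveRoots (G : Subgroup (V ≃ₗ[ℝ] V)) (v : V) : Set V := {a | a ∈ roots G ∧ 0 < ⟪v, a⟫}

lemma mem_positiveRoots_or_neg_mem {v : V} (hv : IsRegular G v) {a : V} (ha : a ∈ roots G) :
    a ∈ positiveRoots G v ∨ -a ∈ positiveRoots G v := by
  rcases (hv a ha).lt_or_gt with h | h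
  · exact Or.inr ⟨neg_mem_roots ha, by rw [inner_neg_right]; linarith⟩
  · exact Or.inl ⟨ha, h⟩

end Roots

section Cone

def cone (S : Finset V) : Set V := {x | ∃ c : V → ℝ, (∀ b, 0 ≤ c b) ∧ ∑ b ∈ S, c b • b = x}

variable {S : Finset V}

lemma mem_cone_of_mem {a : V} (ha : a ∈ S) : a ∈ cone S := by
  classical
  exact ⟨fun b => if b = a then 1 else 0, fun b => by positivity, by simp [ite_smul, ha]⟩

lemma smul_mem_cone {t : ℝ} (ht : 0 ≤ t) {x : V} (hx : x ∈ cone S) : t • x ∈ cone S := by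
  obtain ⟨c, hc, rfl⟩ := hx
  exact ⟨fun b => t * c b, fun b => mul_nonneg ht (hc b), by simp [Finset.smul_sum, smul_smul]⟩

lemma add_mem_cone {x y : V} (hx : x ∈ cone S) (hy : y ∈ cone S) : x + y ∈ cone S := by
  obtain ⟨c, hc, rfl⟩ := hx
  obtain ⟨d, hd, rfl⟩ := hy
  exact ⟨c + d, fun b => add_nonneg (hc b) (hd b), by simp [add_smul, Finset.sum_add_distrib]⟩

lemma sum_smul_mem_cone {c : V → ℝ} (hc : ∀ b, 0 ≤ c b) : ∑ b ∈ S, c b • b ∈ cone S :=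
  ⟨c, hc, rfl⟩

lemma cone_subset_cone_erase [DecidableEq V] {b : V} (hb : b ∈ cone (S.erase b)) :
    cone S ⊆ cone (S.erase b) := by
  rintro x ⟨c, hc, rfl⟩
  by_cases hbS : b ∈ S
  · rw [← Finset.add_sum_erase S _ hbS]
    exact add_mem_cone (smul_mem_cone (hc b) hb) (sum_smul_mem_cone hc)
  · rw [Finset.erase_eq_of_notMem hbS]
    exact sum_smul_mem_cone hc

lemma inner_nonneg_of_mem_cone {q : V} (hq : ∀ b ∈ S, 0 ≤ ⟪q, b⟫) {x : V} (hx : x ∈ cone S) :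
    0 ≤ ⟪q, x⟫ := by
  obtain ⟨c, hc, rfl⟩ := hx
  rw [inner_sum]
  exact Finset.sum_nonneg fun b hb => by
    rw [real_inner_smul_right]
    exact mul_nonneg (hc b) (hq b hb)

end Cone

section Independence

variable {S : Finset V} {v : V}

lemma eq_zero_of_sum_smul_eq_zero_of_nonneg (hv : ∀ b ∈ S, 0 < ⟪v, b⟫) {c : V → ℝ}
    (hc : ∀ b ∈ S, 0 ≤ c b) (hsum : ∑ b ∈ S, c b • b = 0) : ∀ b ∈ S, c b = 0 := by
  have hterms : ∀ b ∈ S, 0 ≤ c b * ⟪v, b⟫ := fun b hb => mul_nonneg (hc b hb) (hv b hb).le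
  have h0 : ∑ b ∈ S, c b * ⟪v, b⟫ = 0 := by
    simpa [inner_sum, real_inner_smul_right] using congrArg (⟪v, ·⟫) hsum
  intro b hb
  have := (Finset.sum_eq_zero_iff_of_nonneg hterms).mp h0 b hb
  exact (mul_eq_zero.mp this).resolve_right (hv b hb).ne'

lemma eq_zero_of_sum_smul_eq_zero_of_inner_nonpos (hv : ∀ b ∈ S, 0 < ⟪v, b⟫)
    (hobtuse : ∀ a ∈ S, ∀ b ∈ S, a ≠ b → ⟪a, b⟫ ≤ 0) {d : V → ℝ}
    (hsum : ∑ b ∈ S, d b • b = 0) : ∀ b ∈ S, d b = 0 := by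
  -- Pairing the two expressions of `z` (through `d⁺` and `d⁻`) gives `⟪z, z⟫ ≤ 0`, since
  -- `d⁺ b * d⁻ b = 0` and distinct elements of `S` are obtuse.
  set z := ∑ b ∈ S, max (d b) 0 • b
  have hz : z = ∑ b ∈ S, max (-d b) 0 • b := by
    rw [← sub_eq_zero, ← Finset.sum_sub_distrib, ← hsum]
    refine Finset.sum_congr rfl fun b _ => ?_
    rw [← sub_smul, max_zero_sub_max_neg_zero_eq_self]
  have hzz : ⟪z, z⟫ ≤ 0 := by
    conv_lhs => arg 2; rw [hz]
    simp only [z, sum_inner, inner_sum, real_inner_smul_left, real_inner_smul_right]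
    refine Finset.sum_nonpos fun a ha => Finset.sum_nonpos fun b hb => ?_
    by_cases hab : a = b
    · subst hab
      rcases le_total (d a) 0 with h | h <;> simp [h]
    · exact mul_nonpos_of_nonneg_of_nonpos (le_max_right _ _)
        (mul_nonpos_of_nonneg_of_nonpos (le_max_right _ _) (hobtuse b hb a ha (Ne.symm hab)))
  have hz0 : z = 0 := real_inner_self_nonpos.mp hzz
  have hpos := eq_zero_of_sum_smul_eq_zero_of_nonneg hv (fun b _ => le_max_right _ 0) hz0
  have hneg := eq_zero_of_sum_smul_eq_zero_of_nonneg hv (fun b _ => le_max_right _ 0)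
    (hz ▸ hz0)
  intro b hb
  have h1 := hpos b hb
  have h2 := hneg b hb
  rw [max_eq_right_iff] at h1 h2
  linarith

end Independence

section SimpleSystem

variable {G : Subgroup (V ≃ₗ[ℝ] V)} {v : V}

structure IsSimpleSystem (G : Subgroup (V ≃ₗ[ℝ] V)) (v : V) (Δ : Finset V) : Prop where
  subset_positiveRoots : ↑Δ ⊆ positiveRoots G v
  positiveRoots_subset_cone : positiveRoots G v ⊆ cone Δ
  card_le : ∀ D : Finset V, ↑D ⊆ positiveRoots G v → positiveRoots G v ⊆ cone D →
    Δ.card ≤ D.card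

lemma exists_isSimpleSystem (hfin : (positiveRoots G v).Finite) :
    ∃ Δ, IsSimpleSystem G v Δ := by
  obtain ⟨Δ, ⟨hsub, hcone⟩, hmin⟩ := (InvImage.wf Finset.card wellFounded_lt).has_min
    {D : Finset V | ↑D ⊆ positiveRoots G v ∧ positiveRoots G v ⊆ cone D}
    ⟨hfin.toFinset, by simp, fun a ha => mem_cone_of_mem (hfin.mem_toFinset.mpr ha)⟩
  exact ⟨Δ, hsub, hcone, fun D hD hDcone => not_lt.mp (hmin D ⟨hD, hDcone⟩)⟩

namespace IsSimpleSystem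

variable {Δ : Finset V}

lemma mem_roots (hΔ : IsSimpleSystem G v Δ) {δ : V} (hδ : δ ∈ Δ) : δ ∈ roots G :=
  (hΔ.subset_positiveRoots hδ).1

lemma inner_pos (hΔ : IsSimpleSystem G v Δ) {δ : V} (hδ : δ ∈ Δ) : 0 < ⟪v, δ⟫ :=
  (hΔ.subset_positiveRoots hδ).2

lemma notMem_cone_erase [DecidableEq V] (hΔ : IsSimpleSystem G v Δ) {δ : V} (hδ : δ ∈ Δ) :
    δ ∉ cone (Δ.erase δ) := fun h =>
  (Finset.card_erase_lt_of_mem hδ).not_ge <| hΔ.card_le _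
    (fun _ ha => hΔ.subset_positiveRoots (Finset.mem_of_mem_erase ha))
    (hΔ.positiveRoots_subset_cone.trans (cone_subset_cone_erase h))

lemma sub_smul_notMem_cone (hΔ : IsSimpleSystem G v Δ) {γ δ : V} (hγ : γ ∈ Δ) (hδ : δ ∈ Δ)
    (hne : δ ≠ γ) {c : ℝ} (hc : 0 < c) : γ - c • δ ∉ cone Δ := by
  classical
  rintro ⟨m, hm, hsum⟩
  rw [← Finset.add_sum_erase Δ _ hγ] at hsum
  -- `(1 - m γ) • γ = y` with `⟪v, y⟫ > 0` and `y` in the cone of the other simple roots: the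
  -- coefficient `1 - m γ` can be neither `≤ 0` (pair with `v`) nor `> 0` (minimality of `Δ`).
  set y := c • δ + ∑ ε ∈ Δ.erase γ, m ε • ε
  have hy : (1 - m γ) • γ = y := by linear_combination (norm := module) (-1 : ℝ) • hsum
  have hyc : y ∈ cone (Δ.erase γ) :=
    add_mem_cone (smul_mem_cone hc.le (mem_cone_of_mem (Finset.mem_erase.mpr ⟨hne, hδ⟩)))
      (sum_smul_mem_cone hm)
  have hvy : 0 < ⟪v, y⟫ := by
    have := inner_nonneg_of_mem_cone (fun b hb => (hΔ.inner_pos (Finset.mem_of_mem_erase hb)).le)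
      (sum_smul_mem_cone hm (S := Δ.erase γ))
    rw [inner_add_right, real_inner_smul_right]
    nlinarith [hΔ.inner_pos hδ]
  rcases le_or_gt (1 - m γ) 0 with h | h
  · have : ⟪v, (1 - m γ) • γ⟫ ≤ 0 := by
      rw [real_inner_smul_right]
      exact mul_nonpos_of_nonpos_of_nonneg h (hΔ.inner_pos hγ).le
    rw [hy] at this
    linarith
  · apply hΔ.notMem_cone_erase hγ
    have := smul_mem_cone (inv_nonneg.mpr h.le) hyc
    rwa [← hy, smul_smul, inv_mul_cancel₀ h.ne', one_smul] at this

lemma sEquiv_apply_mem_roots (hΔ : IsSimpleSystem G v Δ) (horth : IsOrthogonal G) {α β : V}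
    (hα : α ∈ Δ) (hβ : β ∈ roots G) : sEquiv α β ∈ roots G :=
  apply_mem_roots horth (hΔ.mem_roots hα).2 hβ

lemma inner_nonpos (hΔ : IsSimpleSystem G v Δ) (hv : IsRegular G v) (horth : IsOrthogonal G)
    {α β : V} (hα : α ∈ Δ) (hβ : β ∈ Δ) (hne : α ≠ β) : ⟪α, β⟫ ≤ 0 := by
  by_contra! hpos
  set c := 2 * ⟪β, α⟫
  have hc : 0 < c := by rw [real_inner_comm] at hpos; positivity
  have hs : sEquiv α β = β - c • α := by
    rw [sEquiv_apply, sR_of_inner_self_eq_one (hΔ.mem_roots hα).1]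
  rcases mem_positiveRoots_or_neg_mem hv (hΔ.sEquiv_apply_mem_roots horth hα (hΔ.mem_roots hβ))
    with h | h
  · exact hΔ.sub_smul_notMem_cone hβ hα hne hc (hs ▸ hΔ.positiveRoots_subset_cone h)
  · refine hΔ.sub_smul_notMem_cone hα hβ hne.symm (inv_pos.mpr hc) ?_
    have := smul_mem_cone (inv_nonneg.mpr hc.le) (hΔ.positiveRoots_subset_cone h)
    rwa [hs, smul_neg, smul_sub, smul_smul, inv_mul_cancel₀ hc.ne', one_smul, neg_sub] at this

lemma eq_of_inner_sEquiv_apply_neg (hΔ : IsSimpleSystem G v Δ) (hv : IsRegular G v)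
    (horth : IsOrthogonal G) {α β : V} (hα : α ∈ Δ) (hβ : β ∈ positiveRoots G v)
    (hneg : ⟪v, sEquiv α β⟫ < 0) : β = α := by
  classical
  have hroot := hΔ.sEquiv_apply_mem_roots horth hα hβ.1
  obtain ⟨m, hm, hmβ⟩ := hΔ.positiveRoots_subset_cone hβ
  obtain ⟨n, hn, hnβ⟩ := hΔ.positiveRoots_subset_cone (a := -sEquiv α β)
    ⟨neg_mem_roots hroot, by rw [inner_neg_right]; linarith⟩
  have hs : sEquiv α β = β - (2 * ⟪β, α⟫) • α := by
    rw [sEquiv_apply, sR_of_inner_self_eq_one (hΔ.mem_roots hα).1]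
  have hsum : ∑ ε ∈ Δ, (m ε + n ε - if ε = α then 2 * ⟪β, α⟫ else 0) • ε = 0 := by
    simp only [sub_smul, add_smul, Finset.sum_sub_distrib, Finset.sum_add_distrib, ite_smul,
      zero_smul, Finset.sum_ite_eq', if_pos hα, hmβ, hnβ, hs]
    abel
  have hcoeff := eq_zero_of_sum_smul_eq_zero_of_inner_nonpos (fun _ hb => hΔ.inner_pos hb)
    (fun _ ha _ hb hab => hΔ.inner_nonpos hv horth ha hb hab) hsum
  have hβα : β = m α • α := by
    rw [← hmβ, Finset.sum_eq_single_of_mem α hα]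
    intro ε hε hεα
    have := hcoeff ε hε
    rw [if_neg hεα] at this
    rw [le_antisymm (by linarith [hn ε]) (hm ε), zero_smul]
  rcases eq_or_eq_neg_of_eq_smul (hΔ.mem_roots hα).1 hβ.1.1 hβα with h | h
  · exact h
  · have := hβ.2
    rw [h, inner_neg_right] at this
    linarith [hΔ.inner_pos hα]

lemma sEquiv_apply_mem_positiveRoots (hΔ : IsSimpleSystem G v Δ) (hv : IsRegular G v)
    (horth : IsOrthogonal G) {α β : V} (hα : α ∈ Δ) (hβ : β ∈ positiveRoots G v)
    (hne : β ≠ α) : sEquiv α β ∈ positiveRoots G v := by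
  have hroot := hΔ.sEquiv_apply_mem_roots horth hα hβ.1
  exact ⟨hroot, (hv _ hroot).lt_or_gt.resolve_left fun h =>
    hne (hΔ.eq_of_inner_sEquiv_apply_neg hv horth hα hβ h)⟩

lemma exists_inner_pos (hΔ : IsSimpleSystem G v Δ) {β : V} (hβ : β ∈ positiveRoots G v) :
    ∃ ε ∈ Δ, 0 < ⟪ε, β⟫ := by
  obtain ⟨m, hm, hmβ⟩ := hΔ.positiveRoots_subset_cone hβ
  have h1 : ∑ ε ∈ Δ, (0 : ℝ) < ∑ ε ∈ Δ, m ε * ⟪ε, β⟫ := by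
    have : ⟪∑ ε ∈ Δ, m ε • ε, β⟫ = 1 := by rw [hmβ, hβ.1.1]
    simp only [sum_inner, real_inner_smul_left] at this
    simp [this]
  obtain ⟨ε, hε, hpos⟩ := Finset.exists_lt_of_sum_lt h1
  exact ⟨ε, hε, pos_of_mul_pos_right hpos (hm ε)⟩

lemma sEquiv_mem_closure (hΔ : IsSimpleSystem G v Δ) (hv : IsRegular G v)
    (horth : IsOrthogonal G) (hfin : (positiveRoots G v).Finite) {β : V}
    (hβ : β ∈ positiveRoots G v) : sEquiv β ∈ Subgroup.closure (sEquiv '' ↑Δ) := by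
  have hwf : (positiveRoots G v).WellFoundedOn (fun a b => ⟪v, a⟫ < ⟪v, b⟫) :=
    Set.wellFoundedOn_image.mp (hfin.image fun a => ⟪v, a⟫).wellFoundedOn
  apply hwf.induction hβ
  intro β hβ ih
  by_cases hβΔ : β ∈ Δ
  · exact Subgroup.subset_closure ⟨β, hβΔ, rfl⟩
  obtain ⟨ε, hε, hεβ⟩ := hΔ.exists_inner_pos hβ
  have hεW : sEquiv ε ∈ Subgroup.closure (sEquiv '' ↑Δ) := Subgroup.subset_closure ⟨ε, hε, rfl⟩
  obtain ⟨γ, hγdef⟩ : ∃ γ, γ = sEquiv ε β := ⟨_, rfl⟩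
  have hγ : γ ∈ positiveRoots G v := hγdef ▸
    hΔ.sEquiv_apply_mem_positiveRoots hv horth hε hβ fun h => hβΔ (h ▸ hε)
  have hγβ : ⟪v, γ⟫ < ⟪v, β⟫ := by
    rw [hγdef, sEquiv_apply, sR_of_inner_self_eq_one (hΔ.mem_roots hε).1, inner_sub_right,
      real_inner_smul_right, real_inner_comm ε β]
    nlinarith [hΔ.inner_pos hε]
  have hconj : sEquiv β = sEquiv ε * sEquiv γ * sEquiv ε := by
    have : sEquiv ε γ = β := hγdef ▸ sR_sR ε β
    rw [← this, sEquiv_apply_eq_conj (horth _ (hΔ.mem_roots hε).2), sEquiv_inv]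
  rw [hconj]
  exact mul_mem (mul_mem hεW (ih γ hγ hγβ)) hεW

lemma le_closure (hΔ : IsSimpleSystem G v Δ) (hv : IsRegular G v) (horth : IsOrthogonal G)
    (hfin : (positiveRoots G v).Finite)
    (hgen : Subgroup.closure {t : V ≃ₗ[ℝ] V | t ∈ G ∧ IsReflAuto t} = G) :
    G ≤ Subgroup.closure (sEquiv '' ↑Δ) := by
  rw [← hgen, Subgroup.closure_le]
  rintro t ⟨htG, hrefl⟩
  obtain ⟨b, hb, rfl⟩ := exists_mem_roots_of_isReflAuto htG hrefl
  rcases mem_positiveRoots_or_neg_mem hv hb with h | h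
  · exact hΔ.sEquiv_mem_closure hv horth hfin h
  · rw [← sEquiv_neg]
    exact hΔ.sEquiv_mem_closure hv horth hfin h

lemma list_prod_mem (hΔ : IsSimpleSystem G v Δ) {L : List (V ≃ₗ[ℝ] V)}
    (hL : ∀ t ∈ L, t ∈ sEquiv '' ↑Δ) : L.prod ∈ G :=
  G.list_prod_mem fun t ht => by
    obtain ⟨δ, hδ, rfl⟩ := hL t ht
    exact (hΔ.mem_roots hδ).2

lemma exists_list_prod_eq_mul_sEquiv (hΔ : IsSimpleSystem G v Δ) (hv : IsRegular G v)
    (horth : IsOrthogonal G) {α : V} (hα : α ∈ Δ) (L : List (V ≃ₗ[ℝ] V))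
    (hL : ∀ t ∈ L, t ∈ sEquiv '' ↑Δ) (hneg : ⟪v, L.prod α⟫ < 0) :
    ∃ L' : List (V ≃ₗ[ℝ] V), (∀ t ∈ L', t ∈ sEquiv '' ↑Δ) ∧ L'.length + 1 = L.length ∧
      L'.prod = L.prod * sEquiv α := by
  induction L with
  | nil => exact absurd hneg (not_lt.mpr (hΔ.inner_pos hα).le)
  | cons t M ih =>
    obtain ⟨δ, hδ, rfl⟩ := hL t List.mem_cons_self
    have hM : ∀ t ∈ M, t ∈ sEquiv '' ↑Δ := fun t ht => hL t (List.mem_cons_of_mem _ ht)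
    have hMG := hΔ.list_prod_mem hM
    have hroot : M.prod α ∈ roots G := apply_mem_roots horth hMG (hΔ.mem_roots hα)
    rcases (hv _ hroot).lt_or_gt with hMα | hMα
    · obtain ⟨M', hM', hlen, hprod⟩ := ih hM hMα
      refine ⟨sEquiv δ :: M', ?_, by simp [← hlen], ?_⟩
      · intro t ht
        rcases List.mem_cons.mp ht with rfl | ht
        exacts [⟨δ, hδ, rfl⟩, hM' t ht]
      · rw [List.prod_cons, List.prod_cons, hprod, mul_assoc]
    · have hδ_eq : M.prod α = δ :=
        hΔ.eq_of_inner_sEquiv_apply_neg hv horth hδ ⟨hroot, hMα⟩ (by simpa using hneg)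
      refine ⟨M, hM, rfl, ?_⟩
      rw [List.prod_cons, ← hδ_eq, sEquiv_apply_eq_conj (horth _ hMG), inv_mul_cancel_right,
        mul_assoc, sEquiv_mul_self, mul_one]

lemma exists_inner_list_prod_apply_neg (hΔ : IsSimpleSystem G v Δ) (hv : IsRegular G v)
    (horth : IsOrthogonal G) (L : List (V ≃ₗ[ℝ] V)) (hL : ∀ t ∈ L, t ∈ sEquiv '' ↑Δ)
    (hne : L.prod ≠ 1) : ∃ δ ∈ Δ, ⟪v, L.prod δ⟫ < 0 := by
  induction h : L.length using Nat.strong_induction_on generalizing L with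
  | _ n ih =>
  obtain ⟨M, t, rfl⟩ := (List.eq_nil_or_concat L).resolve_left (by rintro rfl; exact hne rfl)
  obtain ⟨δ, hδ, rfl⟩ := hL t (by simp)
  have hM : ∀ t ∈ M, t ∈ sEquiv '' ↑Δ := fun t ht => hL t (by simp [ht])
  have hprod : (M.concat (sEquiv δ)).prod = M.prod * sEquiv δ := by simp
  by_contra! hpos
  have hMδ : ⟪v, M.prod δ⟫ < 0 := by
    have hroot := apply_mem_roots horth (hΔ.list_prod_mem hL) (hΔ.mem_roots hδ)
    have hMδ_eq : M.prod δ = -(M.concat (sEquiv δ)).prod δ := by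
      rw [hprod, LinearEquiv.mul_apply, sEquiv_apply, sR_self, map_neg, neg_neg]
    rw [hMδ_eq, inner_neg_right, neg_lt_zero]
    exact (hpos δ hδ).lt_of_ne' (hv _ hroot)
  obtain ⟨M', hM', hlen, hM'prod⟩ := hΔ.exists_list_prod_eq_mul_sEquiv hv horth hδ M hM hMδ
  rw [← hprod] at hM'prod
  obtain ⟨δ', hδ', hneg⟩ := ih M'.length (by simp at h; omega) M' hM' (hM'prod ▸ hne) rfl
  exact (hpos δ' hδ').not_gt (hM'prod ▸ hneg)

end IsSimpleSystem

lemma exists_list_of_mem_closure_sEquiv {Δ : Finset V} {g : V ≃ₗ[ℝ] V}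
    (hg : g ∈ Subgroup.closure (sEquiv '' ↑Δ)) :
    ∃ L : List (V ≃ₗ[ℝ] V), (∀ t ∈ L, t ∈ sEquiv '' ↑Δ) ∧ L.prod = g := by
  have hinv : (sEquiv '' (Δ : Set V))⁻¹ = sEquiv '' ↑Δ := by
    ext t
    simp only [Set.mem_inv, Set.mem_image]
    refine exists_congr fun δ => and_congr_right fun _ => ?_
    conv_lhs => rw [← sEquiv_inv]
    exact inv_inj
  rw [← Subgroup.mem_toSubmonoid, Subgroup.closure_toSubmonoid, hinv, Set.union_self] at hg
  exact Submonoid.exists_list_of_mem_closure hg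

theorem eq_one_of_apply_eq_self [Finite G] (horth : IsOrthogonal G)
    (hgen : Subgroup.closure {t : V ≃ₗ[ℝ] V | t ∈ G ∧ IsReflAuto t} = G) (hv : IsRegular G v)
    {g : V ≃ₗ[ℝ] V} (hg : g ∈ G) (hgv : g v = v) : g = 1 := by
  have hfin : (positiveRoots G v).Finite := roots_finite.subset fun a ha => ha.1
  obtain ⟨Δ, hΔ⟩ := exists_isSimpleSystem hfin
  obtain ⟨L, hL, rfl⟩ := exists_list_of_mem_closure_sEquiv (hΔ.le_closure hv horth hfin hgen hg)
  by_contra hne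
  obtain ⟨δ, hδ, hneg⟩ := hΔ.exists_inner_list_prod_apply_neg hv horth L hL hne
  have : ⟪v, L.prod δ⟫ = ⟪v, δ⟫ := by
    conv_lhs => rw [← hgv]
    exact horth _ hg v δ
  linarith [hΔ.inner_pos hδ]

end SimpleSystem

lemma exists_mem_forall_inner_ne_zero (U : Submodule ℝ V) {T : Set V} (hT : T.Finite)
    (h : ∀ t ∈ T, ∃ u ∈ U, ⟪t, u⟫ ≠ 0) : ∃ p ∈ U, ∀ t ∈ T, ⟪t, p⟫ ≠ 0 := by
  by_contra! hcover
  have := hT.to_subtype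
  obtain ⟨⟨t, ht⟩, htop⟩ := Subspace.exists_eq_top_of_iUnion_eq_univ
    (p := fun t : T => LinearMap.ker ((innerₛₗ ℝ (t : V)).comp U.subtype)) <| by
      refine Set.eq_univ_of_forall fun ⟨p, hp⟩ => ?_
      obtain ⟨t, ht, h0⟩ := hcover p hp
      exact Set.mem_iUnion.mpr ⟨⟨t, ht⟩, by simpa using h0⟩
  obtain ⟨u, hu, hne⟩ := h t ht
  have : (⟨u, hu⟩ : U) ∈ LinearMap.ker ((innerₛₗ ℝ t).comp U.subtype) := htop ▸ Submodule.mem_top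
  exact hne (by simpa using this)

lemma range_id_sub_eq_orthogonal_ker [FiniteDimensional ℝ V] {f : V →ₗ[ℝ] V}
    (hf : ∀ x y, ⟪f x, f y⟫ = ⟪x, y⟫) :
    LinearMap.range (LinearMap.id - f) = (LinearMap.ker (LinearMap.id - f))ᗮ := by
  refine Submodule.eq_of_le_of_finrank_eq ?_ ?_
  · rintro _ ⟨x, rfl⟩
    refine (Submodule.mem_orthogonal _ _).mpr fun u hu => ?_
    have hfu : f u = u := (sub_eq_zero.mp hu).symm
    simp only [LinearMap.sub_apply, LinearMap.id_apply, inner_sub_right]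
    rw [← hf u x, hfu, sub_self]
  · have := LinearMap.finrank_range_add_finrank_ker (LinearMap.id - f)
    have := (LinearMap.ker (LinearMap.id - f)).finrank_add_finrank_orthogonal
    omega

lemma two_mul_inner_sub_left {x y : V} (h : ⟪y, y⟫ = ⟪x, x⟫) :
    2 * ⟪x - y, x⟫ = ⟪x - y, x - y⟫ := by
  simp only [inner_sub_left, inner_sub_right, real_inner_comm x y, h]
  ring

lemma sR_sub_apply_left {x y : V} (h : ⟪y, y⟫ = ⟪x, x⟫) (hxy : x - y ≠ 0) :
    sR (x - y) x = y := by
  rw [sR, real_inner_comm, two_mul_inner_sub_left h, div_self (inner_self_ne_zero.mpr hxy),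
    one_smul, sub_sub_cancel]

lemma sR_sub_apply_right {x y : V} (h : ⟪y, y⟫ = ⟪x, x⟫) (hxy : x - y ≠ 0) :
    sR (x - y) y = x :=
  calc sR (x - y) y = sR (x - y) (sR (x - y) x) := by rw [sR_sub_apply_left h hxy]
    _ = x := sR_sR _ _

theorem exists_mem_roots_forall_inner_eq_zero_of_ne_one {G : Subgroup (V ≃ₗ[ℝ] V)} [Finite G]
    (horth : IsOrthogonal G)
    (hgen : Subgroup.closure {t : V ≃ₗ[ℝ] V | t ∈ G ∧ IsReflAuto t} = G)
    {w : V ≃ₗ[ℝ] V} (hw : w ∈ G) (hne : w ≠ 1) :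
    ∃ β ∈ roots G, ∀ u, w u = u → ⟪β, u⟫ = 0 := by
  by_contra! h
  obtain ⟨p, hp, hreg⟩ := exists_mem_forall_inner_ne_zero
    (LinearMap.ker (LinearMap.id - (w : V →ₗ[ℝ] V))) roots_finite fun β hβ => by
      obtain ⟨u, hu, hβu⟩ := h β hβ
      exact ⟨u, by simp [hu], hβu⟩
  refine hne (eq_one_of_apply_eq_self horth hgen (fun a ha => ?_) hw (sub_eq_zero.mp hp).symm)
  rw [real_inner_comm]
  exact hreg a ha

end ReflectionGroup

open ReflectionGroup

/-- For `w ≠ id` in a finite reflection group there is a root `a ∈ Im(id − w)` such that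
`s_a w` fixes pointwise a subspace strictly larger than `Fix(w)`; specifically, if
`a = x − w(x)` is a root then `2(a,x) = (a,a)`, hence `s_a(x) = w(x)`. -/
theorem statement15 (V : Type) [NormedAddCommGroup V] [InnerProductSpace ℝ V]
    [FiniteDimensional ℝ V]
    (G : Subgroup (V ≃ₗ[ℝ] V)) (hfin : Finite G)
    (hgen : Subgroup.closure {t : V ≃ₗ[ℝ] V | t ∈ G ∧ IsReflAuto t} = G)
    (horth : ∀ g ∈ G, ∀ x y : V, ⟪g x, g y⟫ = ⟪x, y⟫)
    (w : V ≃ₗ[ℝ] V) (hw : w ∈ G) (hne : w ≠ 1) :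
    (∃ a : V, a ≠ 0 ∧ (∃ x : V, a = x - w x) ∧
      (∃ g ∈ G, ∀ x, g x = sR a x) ∧
      (∀ x : V, w x = x → sR a (w x) = x) ∧
      (∃ x : V, sR a (w x) = x ∧ w x ≠ x)) ∧
    (∀ x : V, x - w x ≠ 0 →
      2 * ⟪x - w x, x⟫ = ⟪x - w x, x - w x⟫ ∧ sR (x - w x) x = w x) := by
  have hw_orth : ∀ x y : V, ⟪w x, w y⟫ = ⟪x, y⟫ := horth w hw
  refine ⟨?_, fun x hx =>
    ⟨two_mul_inner_sub_left (hw_orth x x), sR_sub_apply_left (hw_orth x x) hx⟩⟩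
  obtain ⟨β, hβ, hβfix⟩ := exists_mem_roots_forall_inner_eq_zero_of_ne_one horth hgen hw hne
  obtain ⟨x, hx⟩ : β ∈ LinearMap.range (LinearMap.id - (w : V →ₗ[ℝ] V)) := by
    rw [range_id_sub_eq_orthogonal_ker hw_orth, Submodule.mem_orthogonal']
    exact fun u hu => hβfix u (sub_eq_zero.mp hu).symm
  replace hx : x - w x = β := hx
  have hβ0 := ne_zero_of_mem_roots hβ
  refine ⟨β, hβ0, ⟨x, hx.symm⟩, ⟨sEquiv β, hβ.2, fun _ => rfl⟩, fun y hy => ?_, x, ?_, ?_⟩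
  · rw [hy]
    exact sR_of_inner_eq_zero ((real_inner_comm β y).trans (hβfix y hy))
  · rw [← hx]
    exact sR_sub_apply_right (hw_orth x x) (hx ▸ hβ0)
  · exact fun h => hβ0 (by rw [← hx, h, sub_self])
end
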